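/- arXiv:1806.02231 — 10 statements merged into one kernel-verified Lean document; each statement's English description precedes it below -/
import Mathlib

section
/- For the generalized hybrid Fibonacci sequence HJ_n, the ordinary generating function satisfies (1 − p·t − q·t²)·Σ_{r≥0} HJ_r t^r = HJ_0 + t·(HJ_1 − p·HJ_0), equivalently its power series equals [a + b·i + (pb+qa)·ε + ((p²+q)b + pqa)·h + t·((b − pa) + qa·i + qb·ε + (pqb + q²a)·h)] / (1 − pt − qt²). -/
/-! The Horadam recurrence holds componentwise, so `HJ (n+2) = p • HJ (n+1) + q • HJ n` with `p, q`
acting as central scalars. For any sequence `u` in a ring with `u (n+2) = c₁ u (n+1) + c₂ u n`, the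
coefficient of `tⁿ` in `(1 - c₁ t - c₂ t²) Σ u_r t^r` is `u n - c₁ u (n-1) - c₂ u (n-2) = 0` for
`n ≥ 2`, leaving `u 0 + t (u 1 - c₁ u 0)`. -/

open Matrix

noncomputable section

/-- Hybrid numbers modelled via their faithful matrix representation:
the map a+b·i+c·ε+d·h ↦ !![a+c, b-c+d; c-b+d, a-c] is an ℝ-algebra
isomorphism onto M₂(ℝ). -/
abbrev HybridK : Type := Matrix (Fin 2) (Fin 2) ℝ

/-- the hybrid unit i (i² = −1) -/
def hi : HybridK := !![0, 1; -1, 0]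

/-- the hybrid unit ε (ε² = 0) -/
def heps : HybridK := !![1, -1; 1, -1]

/-- the hybrid unit h (h² = 1) -/
def hh : HybridK := !![0, 1; 1, 0]

/-- the hybrid number a + b·i + c·ε + d·h -/
def hyb (a b c d : ℝ) : HybridK := a • (1 : HybridK) + b • hi + c • heps + d • hh

/-- hybrid sequence attached to a real sequence:  x_n + x_{n+1}·i + x_{n+2}·ε + x_{n+3}·h -/
def hybSeq (x : ℕ → ℝ) (n : ℕ) : HybridK := hyb (x n) (x (n+1)) (x (n+2)) (x (n+3))

lemma hyb_add (a b c d a' b' c' d' : ℝ) :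
    hyb a b c d + hyb a' b' c' d' = hyb (a + a') (b + b') (c + c') (d + d') := by
  simp only [hyb, add_smul]
  abel

lemma smul_hyb (r a b c d : ℝ) : r • hyb a b c d = hyb (r * a) (r * b) (r * c) (r * d) := by
  simp only [hyb, smul_add, smul_smul]

lemma hyb_sub (a b c d a' b' c' d' : ℝ) :
    hyb a b c d - hyb a' b' c' d' = hyb (a - a') (b - b') (c - c') (d - d') := by
  simp only [hyb, sub_smul]
  abel

section Recurrence

variable {p q : ℝ} {x : ℕ → ℝ}

lemma hybSeq_add_two (hx : ∀ n, x (n + 2) = p * x (n + 1) + q * x n) (n : ℕ) :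
    hybSeq x (n + 2) = p • hybSeq x (n + 1) + q • hybSeq x n := by
  simp only [hybSeq, smul_hyb, hyb_add, ← hx]

lemma hybSeq_succ_sub_smul (hx : ∀ n, x (n + 2) = p * x (n + 1) + q * x n) (n : ℕ) :
    hybSeq x (n + 1) - p • hybSeq x n
      = hyb (x (n + 1) - p * x n) (q * x n) (q * x (n + 1)) (q * x (n + 2)) := by
  simp only [hybSeq, smul_hyb, hyb_sub, hx]
  congr 1 <;> ring

end Recurrence

open PowerSeries in
theorem PowerSeries.mul_mk_eq_of_linearRecurrence {R : Type*} [Ring R] (c₁ c₂ : R) (u : ℕ → R)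
    (h : ∀ n, u (n + 2) = c₁ * u (n + 1) + c₂ * u n) :
    (1 - C c₁ * X - C c₂ * X ^ 2) * mk u = C (u 0) + X * C (u 1 - c₁ * u 0) := by
  ext n
  rcases n with _ | _ | n
  · simp [coeff_zero_eq_constantCoeff]
  · simp [sub_mul, mul_assoc, coeff_C_mul, coeff_succ_X_mul, pow_two]
  · simp [sub_mul, mul_assoc, coeff_C_mul, coeff_succ_X_mul, pow_two, h]

/-- generating function of the generalized hybrid Fibonacci numbers. -/
theorem hybrid_horadam_gf (p q a b : ℝ) (J : ℕ → ℝ)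
    (hJ0 : J 0 = a) (hJ1 : J 1 = b)
    (hrec : ∀ n : ℕ, J (n + 2) = p * J (n + 1) + q * J n) :
    (1 - PowerSeries.C (R := HybridK) (p • (1 : HybridK)) * PowerSeries.X
       - PowerSeries.C (R := HybridK) (q • (1 : HybridK)) * PowerSeries.X ^ 2)
      * PowerSeries.mk (fun r => hybSeq J r)
    = PowerSeries.C (R := HybridK) (hybSeq J 0)
      + PowerSeries.X * PowerSeries.C (R := HybridK) (hybSeq J 1 - p • hybSeq J 0) ∧
    hybSeq J 0 = hyb a b (p * b + q * a) ((p ^ 2 + q) * b + p * q * a) ∧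
    hybSeq J 1 - p • hybSeq J 0
      = hyb (b - p * a) (q * a) (q * b) (p * q * b + q ^ 2 * a) := by
  have hJ2 : J 2 = p * b + q * a := by rw [hrec 0, hJ0, hJ1]
  have hJ3 : J 3 = (p ^ 2 + q) * b + p * q * a := by rw [hrec 1, hJ2, hJ1]; ring
  refine ⟨?_, ?_, ?_⟩
  · rw [← smul_one_mul p (hybSeq J 0)]
    refine PowerSeries.mul_mk_eq_of_linearRecurrence _ _ _ fun n => ?_
    rw [hybSeq_add_two hrec, smul_one_mul, smul_one_mul]
  · rw [hybSeq, hJ0, hJ1, hJ2, hJ3]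
  · rw [hybSeq_succ_sub_smul hrec, hJ0, hJ1, hJ2]
    congr 1; ring
end
end

section
/- With α̲ = 1 + α·i + α²·ε + α³·h and β̲ = 1 + β·i + β²·ε + β³·h, the product α̲·β̲ equals HL_0 − (q³ + pq − q + 1) + q(α − β)(HF_0 − ω), where ω = (1−p)·i − q·ε + (p²+q+1)·h, HL_0 = 2 + p·i + (p²+2q)·ε + (p³+3pq)·h, and HF_0 = i + p·ε + (p²+q)·h. -/
open Matrix

noncomputable section

/-- the product α̲·β̲. -/
theorem hybrid_alpha_mul_beta (p q α β : ℝ) (hpq : p ^ 2 + 4 * q > 0)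
    (hα : α ^ 2 = p * α + q) (hβ : β ^ 2 = p * β + q) (hab : α > β) :
    hyb 1 α (α ^ 2) (α ^ 3) * hyb 1 β (β ^ 2) (β ^ 3)
      = hyb 2 p (p ^ 2 + 2 * q) (p ^ 3 + 3 * p * q)
        - (q ^ 3 + p * q - q + 1) • (1 : HybridK)
        + (q * (α - β)) •
          (hyb 0 1 p (p ^ 2 + q) - hyb 0 (1 - p) (-q) (p ^ 2 + q + 1)) := by
  have hs : α + β = p := by
    have hne : α - β ≠ 0 := sub_ne_zero.mpr (ne_of_gt hab)
    have : (α - β) * (α + β - p) = 0 := by nlinarith [hα, hβ]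
    have := mul_eq_zero.mp this
    rcases this with h | h
    · exact absurd h hne
    · linarith
  have hm : α * β = -q := by nlinarith [hα, hs]
  subst hs
  have hq : q = -(α * β) := by linarith
  subst hq
  ext i j
  fin_cases i <;> fin_cases j <;>
    simp [hyb, hi, heps, hh, Matrix.mul_apply, Fin.sum_univ_succ, Matrix.one_apply] <;> ring
end
end

section
/- With notation as above, β̲·α̲ = HL_0 − (q³ + pq − q + 1) − q(α − β)(HF_0 − ω); consequently α̲·β̲ + β̲·α̲ = 2(HL_0 − (q³ + pq − q + 1)). -/
open Matrix

noncomputable section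

/-- β̲·α̲ and the sum α̲·β̲ + β̲·α̲. -/
theorem hybrid_beta_mul_alpha (p q α β : ℝ) (hpq : p ^ 2 + 4 * q > 0)
    (hα : α ^ 2 = p * α + q) (hβ : β ^ 2 = p * β + q) (hab : α > β) :
    hyb 1 β (β ^ 2) (β ^ 3) * hyb 1 α (α ^ 2) (α ^ 3)
      = hyb 2 p (p ^ 2 + 2 * q) (p ^ 3 + 3 * p * q)
        - (q ^ 3 + p * q - q + 1) • (1 : HybridK)
        - (q * (α - β)) •
          (hyb 0 1 p (p ^ 2 + q) - hyb 0 (1 - p) (-q) (p ^ 2 + q + 1)) ∧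
    hyb 1 α (α ^ 2) (α ^ 3) * hyb 1 β (β ^ 2) (β ^ 3)
      + hyb 1 β (β ^ 2) (β ^ 3) * hyb 1 α (α ^ 2) (α ^ 3)
      = (2 : ℝ) • (hyb 2 p (p ^ 2 + 2 * q) (p ^ 3 + 3 * p * q)
          - (q ^ 3 + p * q - q + 1) • (1 : HybridK)) := by
  have hne : α - β ≠ 0 := sub_ne_zero.mpr (ne_of_gt hab)
  have hs : p = α + β := by
    have h1 : (α - β) * (α + β - p) = 0 := by nlinarith [hα, hβ]
    have := (mul_eq_zero.mp h1).resolve_left hne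
    linarith
  have hm : q = -(α * β) := by nlinarith [hα, hs]
  subst hs hm
  constructor <;>
  · ext i j
    fin_cases i <;> fin_cases j <;>
      simp [hyb, hi, heps, hh, Matrix.mul_apply, Fin.sum_univ_two, Matrix.one_apply] <;>
      ring
end
end

section
/- Catalan identity for generalized hybrid Fibonacci numbers: for integers m ≥ r ≥ 0, HJ_m² − HJ_{m+r}·HJ_{m−r} = −A·B·(−q)^m·F_{−r}·[(HL_0 − (q³+pq−q+1))·F_r + q·(HF_0 − ω)·L_r], where F_{−r} = −(−q)^{−r}F_r (assuming q ≠ 0). -/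
open Matrix

noncomputable section

set_option maxHeartbeats 4000000

/-- Catalan identity for generalized hybrid Fibonacci numbers. -/
theorem hybrid_horadam_catalan (p q a b α β : ℝ) (hpq : p ^ 2 + 4 * q > 0)
    (hq : q ≠ 0) (hα : α ^ 2 = p * α + q) (hβ : β ^ 2 = p * β + q) (hab : α > β)
    (F L J : ℕ → ℝ) (hF0 : F 0 = 0) (hF1 : F 1 = 1)
    (hFrec : ∀ n : ℕ, F (n + 2) = p * F (n + 1) + q * F n)
    (hL0 : L 0 = 2) (hL1 : L 1 = p)
    (hLrec : ∀ n : ℕ, L (n + 2) = p * L (n + 1) + q * L n)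
    (hJ0 : J 0 = a) (hJ1 : J 1 = b)
    (hJrec : ∀ n : ℕ, J (n + 2) = p * J (n + 1) + q * J n) :
    ∀ m r : ℕ, r ≤ m →
      hybSeq J m ^ 2 - hybSeq J (m + r) * hybSeq J (m - r)
        = (-((b - a * β) * (b - a * α) * (-q) ^ m * (-((-q : ℝ) ^ (-(r : ℤ)) * F r)))) •
          (F r • (hyb 2 p (p ^ 2 + 2 * q) (p ^ 3 + 3 * p * q)
              - (q ^ 3 + p * q - q + 1) • (1 : HybridK))
            + (q * L r) •
              (hyb 0 1 p (p ^ 2 + q) - hyb 0 (1 - p) (-q) (p ^ 2 + q + 1))) := by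
  have hd : α - β ≠ 0 := sub_ne_zero.mpr (ne_of_gt hab)
  have hp : p = α + β := by
    have h0 : (α - β) * (α + β - p) = 0 := by linear_combination hα - hβ
    rcases mul_eq_zero.mp h0 with h | h
    · exact absurd h hd
    · linarith
  subst hp
  have hq2 : q = -(α * β) := by linear_combination -hα
  subst hq2
  have hA : α ≠ 0 := fun h => hq (by simp [h])
  have hB : β ≠ 0 := fun h => hq (by simp [h])
  have hJb : ∀ n, (α - β) * J n = (b - a * β) * α ^ n - (b - a * α) * β ^ n := by
    intro n
    induction n using Nat.twoStepInduction with
    | zero => simp [hJ0]; ring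
    | one => simp [hJ1]; ring
    | more n ih1 ih2 =>
      rw [hJrec n]
      linear_combination (α + β) * ih2 - (α * β) * ih1
  have hFb : ∀ n, (α - β) * F n = α ^ n - β ^ n := by
    intro n
    induction n using Nat.twoStepInduction with
    | zero => simp [hF0]
    | one => simp [hF1]
    | more n ih1 ih2 =>
      rw [hFrec n]
      linear_combination (α + β) * ih2 - (α * β) * ih1
  have hLb : ∀ n, L n = α ^ n + β ^ n := by
    intro n
    induction n using Nat.twoStepInduction with
    | zero => rw [hL0]; norm_num
    | one => rw [hL1, pow_one, pow_one]
    | more n ih1 ih2 =>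
      rw [hLrec n, ih1, ih2]
      ring
  have hJ' : ∀ n, J n = ((b - a * β) * α ^ n - (b - a * α) * β ^ n) / (α - β) := by
    intro n
    field_simp
    linear_combination hJb n
  have hF' : ∀ n, F n = (α ^ n - β ^ n) / (α - β) := by
    intro n
    field_simp
    linear_combination hFb n
  have h1 : ∀ n, hybSeq J n
      = ((b - a * β) * α ^ n / (α - β)) • hyb 1 α (α ^ 2) (α ^ 3) - ((b - a * α) * β ^ n / (α - β)) • hyb 1 β (β ^ 2) (β ^ 3) := by
    intro n
    ext i j
    fin_cases i <;> fin_cases j <;>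
    · simp [hybSeq, hyb, hi, heps, hh, Matrix.one_fin_two, hJ', Matrix.mul_apply,
        Fin.sum_univ_two]
      field_simp
      ring
  have key : ∀ (x y x' y' : ℝ) (M N : HybridK),
      (x • M - y • N) * (x' • M - y' • N)
        = (x * x') • (M * M) - (x * y') • (M * N) - (y * x') • (N * M) + (y * y') • (N * N) := by
    intro x y x' y' M N
    simp only [sub_mul, mul_sub, smul_mul_assoc, mul_smul_comm, smul_smul]
    module
  have hPab : hyb 1 α (α ^ 2) (α ^ 3) * hyb 1 β (β ^ 2) (β ^ 3)
      = (hyb 2 (α + β) ((α + β) ^ 2 + 2 * -(α * β)) ((α + β) ^ 3 + 3 * (α + β) * -(α * β)) - ((-(α * β)) ^ 3 + (α + β) * -(α * β) - -(α * β) + 1) • (1 : HybridK)) + ((α - β) * -(α * β)) • (hyb 0 1 (α + β) ((α + β) ^ 2 + -(α * β)) - hyb 0 (1 - (α + β)) (- -(α * β)) ((α + β) ^ 2 + -(α * β) + 1)) := by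
    ext i j
    fin_cases i <;> fin_cases j <;>
    · simp [hyb, hi, heps, hh, Matrix.one_fin_two, Matrix.mul_apply, Fin.sum_univ_two]
      ring
  have hPba : hyb 1 β (β ^ 2) (β ^ 3) * hyb 1 α (α ^ 2) (α ^ 3)
      = (hyb 2 (α + β) ((α + β) ^ 2 + 2 * -(α * β)) ((α + β) ^ 3 + 3 * (α + β) * -(α * β)) - ((-(α * β)) ^ 3 + (α + β) * -(α * β) - -(α * β) + 1) • (1 : HybridK)) - ((α - β) * -(α * β)) • (hyb 0 1 (α + β) ((α + β) ^ 2 + -(α * β)) - hyb 0 (1 - (α + β)) (- -(α * β)) ((α + β) ^ 2 + -(α * β) + 1)) := by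
    ext i j
    fin_cases i <;> fin_cases j <;>
    · simp [hyb, hi, heps, hh, Matrix.one_fin_two, Matrix.mul_apply, Fin.sum_univ_two]
      ring
  intro m r hr
  obtain ⟨k, rfl⟩ : ∃ k, m = k + r := ⟨m - r, (Nat.sub_add_cancel hr).symm⟩
  have hmr : k + r - r = k := by omega
  rw [hmr, pow_two, h1, h1, h1, key, key, hPab, hPba, hF' r, hLb r]
  simp only [_root_.zpow_neg, zpow_natCast, neg_neg]
  match_scalars <;>
  · field_simp
    ring
end
end

section
/- Cassini identity for generalized hybrid Fibonacci numbers: for all m ≥ 1, HJ_m² − HJ_{m+1}·HJ_{m−1} = A·B·(−q)^{m−1}·[(HL_0 − (q³+pq−q+1)) + pq·(HF_0 − ω)]. -/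
open Matrix

noncomputable section

/-- Cassini step: the key noncommutative algebra identity. -/
lemma cassini_step (X Y Z : HybridK) (p q : ℝ) (h1 : X = p•Y + q•Z) :
    X^2 - (p•X + q•Y)*Y = (-q) • (Y^2 - X*Z) := by
  subst h1
  simp only [sq, add_mul, mul_add, smul_mul_assoc, mul_smul_comm, smul_add, smul_smul,
    smul_sub, neg_smul]
  module

/-- Cassini identity for generalized hybrid Fibonacci numbers. -/
theorem hybrid_horadam_cassini (p q a b α β : ℝ) (hpq : p ^ 2 + 4 * q > 0)
    (hα : α ^ 2 = p * α + q) (hβ : β ^ 2 = p * β + q) (hab : α > β)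
    (J : ℕ → ℝ) (hJ0 : J 0 = a) (hJ1 : J 1 = b)
    (hJrec : ∀ n : ℕ, J (n + 2) = p * J (n + 1) + q * J n) :
    ∀ m : ℕ, 1 ≤ m →
      hybSeq J m ^ 2 - hybSeq J (m + 1) * hybSeq J (m - 1)
        = ((b - a * β) * (b - a * α) * (-q) ^ (m - 1)) •
          ((hyb 2 p (p ^ 2 + 2 * q) (p ^ 3 + 3 * p * q)
              - (q ^ 3 + p * q - q + 1) • (1 : HybridK))
            + (p * q) •
              (hyb 0 1 p (p ^ 2 + q) - hyb 0 (1 - p) (-q) (p ^ 2 + q + 1))) := by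
  -- root facts
  have hne : α - β ≠ 0 := sub_ne_zero.mpr (ne_of_gt hab)
  have hsum : α + β = p := by
    have h : (α - β) * (α + β) = (α - β) * p := by nlinarith [hα, hβ]
    exact mul_left_cancel₀ hne h
  have hprod : α * β = -q := by nlinarith [hβ, hsum]
  have hAB : (b - a * β) * (b - a * α) = b^2 - p*a*b - q*a^2 := by
    have : (b - a * β) * (b - a * α) = b^2 - a*b*(α+β) + a^2*(α*β) := by ring
    rw [this, hsum, hprod]; ring
  -- recurrence at the hybrid level
  have hrec : ∀ n : ℕ, hybSeq J (n+2) = p • hybSeq J (n+1) + q • hybSeq J n := by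
    intro n
    have e0 : J (n+2) = p * J (n+1) + q * J n := hJrec n
    have e1 : J (n+3) = p * J (n+2) + q * J (n+1) := hJrec (n+1)
    have e2 : J (n+4) = p * J (n+3) + q * J (n+2) := hJrec (n+2)
    have e3 : J (n+5) = p * J (n+4) + q * J (n+3) := hJrec (n+3)
    show hyb (J (n+2)) (J (n+3)) (J (n+4)) (J (n+5))
        = p • hyb (J (n+1)) (J (n+2)) (J (n+3)) (J (n+4))
          + q • hyb (J n) (J (n+1)) (J (n+2)) (J (n+3))
    simp only [e3, e2, e1, e0]
    unfold hyb
    module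
  intro m hm
  induction m, hm using Nat.le_induction with
  | base =>
      have h2 : J 2 = p * b + q * a := by rw [hJrec 0, hJ0, hJ1]
      have h3 : J 3 = p * (p*b+q*a) + q * b := by rw [hJrec 1, h2, hJ1]
      have h4 : J 4 = p * (p * (p*b+q*a) + q * b) + q * (p*b+q*a) := by rw [hJrec 2, h3, h2]
      have h5 : J 5 = p * (p * (p * (p*b+q*a) + q * b) + q * (p*b+q*a))
          + q * (p * (p*b+q*a) + q * b) := by rw [hJrec 3, h4, h3]
      rw [hAB]
      show hybSeq J 1 ^ 2 - hybSeq J 2 * hybSeq J 0 = _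
      unfold hybSeq
      norm_num [h2, h3, h4, h5, hJ0, hJ1]
      unfold hyb hi heps hh
      ext i j
      fin_cases i <;> fin_cases j <;>
        simp [pow_two, Matrix.mul_apply, Fin.sum_univ_two, Matrix.one_apply] <;> ring
  | succ n hn ih =>
      obtain ⟨k, rfl⟩ : ∃ k, n = k + 1 := ⟨n - 1, by omega⟩
      simp only [Nat.add_sub_cancel] at ih ⊢
      have key := cassini_step (hybSeq J (k+2)) (hybSeq J (k+1)) (hybSeq J k) p q (hrec k)
      have h3' : hybSeq J (k+1+1+1) = p • hybSeq J (k+2) + q • hybSeq J (k+1) := hrec (k+1)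
      calc hybSeq J (k+1+1) ^ 2 - hybSeq J (k+1+1+1) * hybSeq J (k+1)
          = (-q) • (hybSeq J (k+1) ^ 2 - hybSeq J (k+2) * hybSeq J k) := by
            rw [h3']; exact key
        _ = _ := by
            rw [ih, smul_smul]
            congr 1
            ring
end
end

section
/- d'Ocagne identity for generalized hybrid Fibonacci numbers: for integers r ≥ m ≥ 0, HJ_r·HJ_{m+1} − HJ_{r+1}·HJ_m = (−q)^m·A·B·[(HL_0 − (q³+pq−q+1))·F_{r−m} + q·(HF_0 − ω)·L_{r−m}]. -/
open Matrix

noncomputable section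

/-! Binet's formula lifts to hybrid numbers: with `α̂ = 1 + α i + α² ε + α³ h` and
`A = b - aβ`, `B = b - aα`, one has `(α - β) HJ_n = A αⁿ α̂ - B βⁿ β̂`. In the d'Ocagne
combination the `α̂²` and `β̂²` terms cancel, leaving `A B (αβ)^m (α^k α̂β̂ - β^k β̂α̂) / (α - β)`
with `k = r - m`. The symmetric part of `α̂β̂` is `HL_0 - (q³ + pq - q + 1)` and its
antisymmetric part is `(α - β) q (HF_0 - ω)`, so writing `α^k, β^k` through
`(α - β) F_k = α^k - β^k` and `L_k = α^k + β^k` gives the identity. -/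

section Binet

variable {R : Type*} [CommRing R] {p q α β : R}

theorem vieta_of_roots [IsDomain R] (hα : α ^ 2 = p * α + q) (hβ : β ^ 2 = p * β + q)
    (hne : α ≠ β) : α + β = p ∧ α * β = -q := by
  have hsum : α + β = p := by
    refine mul_left_cancel₀ (sub_ne_zero.mpr hne) ?_
    linear_combination hα - hβ
  exact ⟨hsum, by linear_combination -hα + α * hsum⟩

variable {x : ℕ → R}

theorem succ_sub_mul_eq_mul_pow (hsum : α + β = p) (hprod : α * β = -q)
    (hx : ∀ n, x (n + 2) = p * x (n + 1) + q * x n) (n : ℕ) :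
    x (n + 1) - β * x n = (x 1 - β * x 0) * α ^ n := by
  induction n with
  | zero => ring
  | succ n ih =>
    rw [hx, pow_succ, ← mul_assoc, ← ih]
    linear_combination x n * hprod - x (n + 1) * hsum

theorem sub_mul_eq_binet (hsum : α + β = p) (hprod : α * β = -q)
    (hx : ∀ n, x (n + 2) = p * x (n + 1) + q * x n) (n : ℕ) :
    (α - β) * x n = (x 1 - β * x 0) * α ^ n - (x 1 - α * x 0) * β ^ n := by
  rw [← succ_sub_mul_eq_mul_pow hsum hprod hx,
    ← succ_sub_mul_eq_mul_pow (by rwa [add_comm]) (by rwa [mul_comm]) hx]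
  ring

end Binet

theorem docagne_of_binet {R A : Type*} [CommRing R] [Ring A] [Algebra R A] {α β c d : R}
    {X Y : A} {u : ℕ → A} (hu : ∀ n, (α - β) • u n = (c * α ^ n) • X - (d * β ^ n) • Y)
    (m k : ℕ) :
    (α - β) ^ 2 • (u (m + k) * u (m + 1) - u (m + k + 1) * u m)
      = ((α - β) * c * d * (α * β) ^ m) • (α ^ k • (X * Y) - β ^ k • (Y * X)) := by
  have hsq : ∀ i j, (α - β) ^ 2 • (u i * u j) = ((α - β) • u i) * ((α - β) • u j) := by
    intro i j
    rw [smul_mul_smul_comm, sq]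
  rw [smul_sub, hsq, hsq, hu, hu, hu, hu]
  simp only [sub_mul, mul_sub, smul_mul_smul_comm]
  module

theorem hyb_eq_matrix (a b c d : ℝ) : hyb a b c d = !![a + c, b - c + d; c - b + d, a - c] := by
  ext i j
  fin_cases i <;> fin_cases j <;> simp [hyb, hi, heps, hh] <;> ring

def hybHat (x : ℝ) : HybridK := hyb 1 x (x ^ 2) (x ^ 3)

theorem sub_smul_hybSeq_eq_binet {α β c d : ℝ} {x : ℕ → ℝ}
    (hx : ∀ n, (α - β) * x n = c * α ^ n - d * β ^ n) (n : ℕ) :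
    (α - β) • hybSeq x n = (c * α ^ n) • hybHat α - (d * β ^ n) • hybHat β := by
  unfold hybSeq hybHat hyb
  linear_combination (norm := module)
    hx n • (1 : HybridK) + hx (n + 1) • hi + hx (n + 2) • heps + hx (n + 3) • hh

section HybHatProducts

variable {p q α β : ℝ}

theorem hybHat_mul_add_mul (hsum : α + β = p) (hprod : α * β = -q) :
    hybHat α * hybHat β + hybHat β * hybHat α
      = (2 : ℝ) • (hyb 2 p (p ^ 2 + 2 * q) (p ^ 3 + 3 * p * q)
          - (q ^ 3 + p * q - q + 1) • (1 : HybridK)) := by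
  subst hsum
  obtain rfl : q = -(α * β) := by linear_combination hprod
  ext i j
  fin_cases i <;> fin_cases j <;> simp [hybHat, hyb_eq_matrix] <;> ring

theorem hybHat_mul_sub_mul (hsum : α + β = p) (hprod : α * β = -q) :
    hybHat α * hybHat β - hybHat β * hybHat α
      = (2 * (α - β) * q) • (hyb 0 1 p (p ^ 2 + q) - hyb 0 (1 - p) (-q) (p ^ 2 + q + 1)) := by
  subst hsum
  obtain rfl : q = -(α * β) := by linear_combination hprod
  ext i j
  fin_cases i <;> fin_cases j <;> simp [hybHat, hyb_eq_matrix] <;> ring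

end HybHatProducts

theorem hybrid_horadam_docagne_general (p q a b α β : ℝ)
    (hα : α ^ 2 = p * α + q) (hβ : β ^ 2 = p * β + q) (hab : α > β)
    (F L J : ℕ → ℝ) (hF0 : F 0 = 0) (hF1 : F 1 = 1)
    (hFrec : ∀ n : ℕ, F (n + 2) = p * F (n + 1) + q * F n)
    (hL0 : L 0 = 2) (hL1 : L 1 = p)
    (hLrec : ∀ n : ℕ, L (n + 2) = p * L (n + 1) + q * L n)
    (hJ0 : J 0 = a) (hJ1 : J 1 = b)
    (hJrec : ∀ n : ℕ, J (n + 2) = p * J (n + 1) + q * J n) :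
    ∀ r m : ℕ, m ≤ r →
      hybSeq J r * hybSeq J (m + 1) - hybSeq J (r + 1) * hybSeq J m
        = ((-q) ^ m * (b - a * β) * (b - a * α)) •
          (F (r - m) • (hyb 2 p (p ^ 2 + 2 * q) (p ^ 3 + 3 * p * q)
              - (q ^ 3 + p * q - q + 1) • (1 : HybridK))
            + (q * L (r - m)) •
              (hyb 0 1 p (p ^ 2 + q) - hyb 0 (1 - p) (-q) (p ^ 2 + q + 1))) := by
  intro r m hmr
  obtain ⟨k, rfl⟩ := Nat.exists_eq_add_of_le hmr
  rw [Nat.add_sub_cancel_left]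
  have hne : α - β ≠ 0 := sub_ne_zero.mpr hab.ne'
  obtain ⟨hsum, hprod⟩ := vieta_of_roots hα hβ hab.ne'
  have hF : (α - β) * F k = α ^ k - β ^ k := by
    simpa [hF0, hF1] using sub_mul_eq_binet hsum hprod hFrec k
  have hL : L k = α ^ k + β ^ k := by
    refine mul_left_cancel₀ hne ?_
    rw [sub_mul_eq_binet hsum hprod hLrec, hL0, hL1, ← hsum]
    ring
  have hHJ := sub_smul_hybSeq_eq_binet fun n => by
    simpa [hJ0, hJ1] using sub_mul_eq_binet hsum hprod hJrec n
  rw [← smul_right_inj (pow_ne_zero 2 hne), docagne_of_binet hHJ, hprod]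
  set K := (α - β) * (b - β * a) * (b - α * a) * (-q) ^ m
  set P : HybridK := hyb 2 p (p ^ 2 + 2 * q) (p ^ 3 + 3 * p * q) - (q ^ 3 + p * q - q + 1) • 1
  set Q : HybridK := hyb 0 1 p (p ^ 2 + q) - hyb 0 (1 - p) (-q) (p ^ 2 + q + 1)
  linear_combination (norm := module)
    (K * (α ^ k - β ^ k) / 2) • hybHat_mul_add_mul hsum hprod
      + (K * (α ^ k + β ^ k) / 2) • hybHat_mul_sub_mul hsum hprod
      - (K * hF) • P - (K * (α - β) * q * hL) • Q

/-- d'Ocagne identity for generalized hybrid Fibonacci numbers. -/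
theorem hybrid_horadam_docagne (p q a b α β : ℝ) (hpq : p ^ 2 + 4 * q > 0)
    (hα : α ^ 2 = p * α + q) (hβ : β ^ 2 = p * β + q) (hab : α > β)
    (F L J : ℕ → ℝ) (hF0 : F 0 = 0) (hF1 : F 1 = 1)
    (hFrec : ∀ n : ℕ, F (n + 2) = p * F (n + 1) + q * F n)
    (hL0 : L 0 = 2) (hL1 : L 1 = p)
    (hLrec : ∀ n : ℕ, L (n + 2) = p * L (n + 1) + q * L n)
    (hJ0 : J 0 = a) (hJ1 : J 1 = b)
    (hJrec : ∀ n : ℕ, J (n + 2) = p * J (n + 1) + q * J n) :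
    ∀ r m : ℕ, m ≤ r →
      hybSeq J r * hybSeq J (m + 1) - hybSeq J (r + 1) * hybSeq J m
        = ((-q) ^ m * (b - a * β) * (b - a * α)) •
          (F (r - m) • (hyb 2 p (p ^ 2 + 2 * q) (p ^ 3 + 3 * p * q)
              - (q ^ 3 + p * q - q + 1) • (1 : HybridK))
            + (q * L (r - m)) •
              (hyb 0 1 p (p ^ 2 + q) - hyb 0 (1 - p) (-q) (p ^ 2 + q + 1))) :=
  hybrid_horadam_docagne_general p q a b α β hα hβ hab F L J hF0 hF1 hFrec hL0 hL1 hLrec hJ0 hJ1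
    hJrec
end
end

section
/- Commutator identity: for any integer r ≥ 0, HJ_{r+1}·HJ_r − HJ_r·HJ_{r+1} = 2·(−q)^{r+1}·A·B·(HF_0 − ω). -/
open Matrix

noncomputable section

/-- commutator identity for generalized hybrid Fibonacci numbers. -/
theorem hybrid_horadam_commutator (p q a b α β : ℝ) (hpq : p ^ 2 + 4 * q > 0)
    (hα : α ^ 2 = p * α + q) (hβ : β ^ 2 = p * β + q) (hab : α > β)
    (J : ℕ → ℝ) (hJ0 : J 0 = a) (hJ1 : J 1 = b)
    (hJrec : ∀ n : ℕ, J (n + 2) = p * J (n + 1) + q * J n) :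
    ∀ r : ℕ,
      hybSeq J (r + 1) * hybSeq J r - hybSeq J r * hybSeq J (r + 1)
        = (2 * (-q) ^ (r + 1) * (b - a * β) * (b - a * α)) •
          (hyb 0 1 p (p ^ 2 + q) - hyb 0 (1 - p) (-q) (p ^ 2 + q + 1)) := by
  have hne : α - β ≠ 0 := sub_ne_zero.mpr (ne_of_gt hab)
  have hsum : α + β = p := by
    have h : (α - β) * (α + β) = (α - β) * p := by ring_nf; nlinarith [hα, hβ]
    exact mul_left_cancel₀ hne h
  have hprod : α * β = -q := by nlinarith [hα, hsum]
  have hAB : (b - a * β) * (b - a * α) = b ^ 2 - p * a * b - q * a ^ 2 := by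
    linear_combination (-(a*b)) * hsum + a^2 * hprod
  have hrec : ∀ n : ℕ, hybSeq J (n + 2) = p • hybSeq J (n + 1) + q • hybSeq J n := by
    intro n
    simp only [hybSeq, hyb]
    have e1 : J (n+2) = p * J (n+1) + q * J n := hJrec n
    have e2 : J (n+3) = p * J (n+2) + q * J (n+1) := hJrec (n+1)
    have e3 : J (n+4) = p * J (n+3) + q * J (n+2) := hJrec (n+2)
    have e4 : J (n+5) = p * J (n+4) + q * J (n+3) := hJrec (n+3)
    show hyb (J (n+2)) (J (n+3)) (J (n+4)) (J (n+5)) =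
      p • hyb (J (n+1)) (J (n+2)) (J (n+3)) (J (n+4)) +
      q • hyb (J n) (J (n+1)) (J (n+2)) (J (n+3))
    rw [e4, e3, e2, e1]
    simp only [hyb]
    module
  intro r
  induction r with
  | zero =>
      have h2 : J 2 = p * J 1 + q * J 0 := hJrec 0
      have h3 : J 3 = p * J 2 + q * J 1 := hJrec 1
      have h4 : J 4 = p * J 3 + q * J 2 := hJrec 2
      rw [show (2 * (-q) ^ (0 + 1) * (b - a * β) * (b - a * α))
            = 2 * (-q) ^ (0 + 1) * (b ^ 2 - p * a * b - q * a ^ 2) from by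
          linear_combination (2 * (-q) ^ (0 + 1)) * hAB]
      ext i j
      fin_cases i <;> fin_cases j <;>
        simp [hybSeq, hyb, hi, heps, hh, Matrix.mul_apply, Fin.sum_univ_two,
          Matrix.one_apply, h2, h3, h4, hJ0, hJ1] <;> ring
  | succ r ih =>
      have step : hybSeq J (r + 2) * hybSeq J (r + 1) - hybSeq J (r + 1) * hybSeq J (r + 2)
          = (-q) • (hybSeq J (r + 1) * hybSeq J r - hybSeq J r * hybSeq J (r + 1)) := by
        rw [hrec r]
        simp only [add_mul, mul_add, smul_mul_assoc, mul_smul_comm]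
        module
      have : hybSeq J (r + 1 + 1) * hybSeq J (r + 1) - hybSeq J (r + 1) * hybSeq J (r + 1 + 1)
          = (-q) • (hybSeq J (r + 1) * hybSeq J r - hybSeq J r * hybSeq J (r + 1)) := step
      rw [this, ih, smul_smul]
      congr 1
      ring
end
end

section
/- For all integers n, r, s ≥ 0 with s ≥ r, HL_{n+r}·HF_{n+s} − HL_{n+s}·HF_{n+r} = 2·(−q)^{n+r}·F_{s−r}·(HL_0 − (q³ + pq − q + 1)). -/
open Matrix

noncomputable section

lemma hyb_eq (a b c d : ℝ) : hyb a b c d = !![a+c, b-c+d; -b+c+d, a-c] := by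
  ext i j
  fin_cases i <;> fin_cases j <;>
    simp [hyb, hi, heps, hh, Matrix.one_apply] <;> ring

/-- HL_{n+r}·HF_{n+s} − HL_{n+s}·HF_{n+r}. -/
theorem hybrid_lucas_fib_identity (p q : ℝ) (hpq : p ^ 2 + 4 * q > 0)
    (F L : ℕ → ℝ) (hF0 : F 0 = 0) (hF1 : F 1 = 1)
    (hFrec : ∀ n : ℕ, F (n + 2) = p * F (n + 1) + q * F n)
    (hL0 : L 0 = 2) (hL1 : L 1 = p)
    (hLrec : ∀ n : ℕ, L (n + 2) = p * L (n + 1) + q * L n) :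
    ∀ n r s : ℕ, r ≤ s →
      hybSeq L (n + r) * hybSeq F (n + s) - hybSeq L (n + s) * hybSeq F (n + r)
        = (2 * (-q) ^ (n + r) * F (s - r)) •
          (hyb 2 p (p ^ 2 + 2 * q) (p ^ 3 + 3 * p * q)
            - (q ^ 3 + p * q - q + 1) • (1 : HybridK)) := by
  set C : HybridK := hyb 2 p (p ^ 2 + 2 * q) (p ^ 3 + 3 * p * q)
      - (q ^ 3 + p * q - q + 1) • (1 : HybridK) with hC
  -- linear recurrence lifted to hybrid sequences
  have hrec : ∀ (x : ℕ → ℝ), (∀ n : ℕ, x (n + 2) = p * x (n + 1) + q * x n) →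
      ∀ m : ℕ, hybSeq x (m + 2) = p • hybSeq x (m + 1) + q • hybSeq x m := by
    intro x hx m
    have e2 : x (m + 2) = p * x (m + 1) + q * x m := hx m
    have e3 : x (m + 3) = p * x (m + 2) + q * x (m + 1) := hx (m + 1)
    have e4 : x (m + 4) = p * x (m + 3) + q * x (m + 2) := hx (m + 2)
    have e5 : x (m + 5) = p * x (m + 4) + q * x (m + 3) := hx (m + 3)
    simp only [hybSeq, hyb, show m + 2 + 1 = m + 3 from rfl, show m + 2 + 2 = m + 4 from rfl,
      show m + 2 + 3 = m + 5 from rfl, show m + 1 + 1 = m + 2 from rfl,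
      show m + 1 + 2 = m + 3 from rfl, show m + 1 + 3 = m + 4 from rfl]
    rw [e5, e4, e3, e2]
    ext i j
    fin_cases i <;> fin_cases j <;>
      simp [hi, heps, hh, Matrix.one_apply] <;> ring
  have hrecF' := hrec F hFrec
  have hrecL' := hrec L hLrec
  -- values
  have f2 : F 2 = p := by have := hFrec 0; simpa [hF0, hF1] using this
  have f3 : F 3 = p ^ 2 + q := by have := hFrec 1; rw [show (1:ℕ)+2 = 3 from rfl] at this; rw [this, f2, hF1]; ring
  have f4 : F 4 = p ^ 3 + 2 * p * q := by have := hFrec 2; rw [show (2:ℕ)+2 = 4 from rfl] at this; rw [this, f3, f2]; ring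
  have l2 : L 2 = p ^ 2 + 2 * q := by have := hLrec 0; rw [this, hL1, hL0]; ring
  have l3 : L 3 = p ^ 3 + 3 * p * q := by have := hLrec 1; rw [show (1:ℕ)+2 = 3 from rfl] at this; rw [this, l2, hL1]; ring
  have l4 : L 4 = p ^ 4 + 4 * p ^ 2 * q + 2 * q ^ 2 := by
    have := hLrec 2; rw [show (2:ℕ)+2 = 4 from rfl] at this; rw [this, l3, l2]; ring
  -- base case in m for the k = 1 identity
  have hbase : ∀ m : ℕ, hybSeq L m * hybSeq F (m + 1) - hybSeq L (m + 1) * hybSeq F m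
      = (2 * (-q) ^ m) • C := by
    intro m
    induction m with
    | zero =>
        simp only [hybSeq, hC, Nat.zero_add]
        norm_num [hF0, hF1, f2, f3, f4, hL0, hL1, l2, l3, l4, hyb]
        ext i j
        fin_cases i <;> fin_cases j <;>
          simp [hi, heps, hh, Matrix.mul_apply, Fin.sum_univ_two, Matrix.one_apply] <;> ring
    | succ m ih =>
        have key : hybSeq L (m + 1) * hybSeq F m - hybSeq L m * hybSeq F (m + 1)
            = -((2 * (-q) ^ m) • C) := by rw [← ih, neg_sub]
        rw [show m + 1 + 1 = m + 2 from rfl, hrecF' m, hrecL' m]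
        rw [mul_add, add_mul, mul_smul_comm, mul_smul_comm, smul_mul_assoc, smul_mul_assoc]
        have expand : ∀ X A B : HybridK, p • X + q • A - (p • X + q • B) = q • (A - B) := by
          intro X A B; module
        rw [expand, key, smul_neg, smul_smul]
        rw [show q * (2 * (-q) ^ m) = -(2 * (-q) ^ (m + 1)) by rw [pow_succ]; ring]
        rw [neg_smul, neg_neg]
  -- main identity
  have main : ∀ m k : ℕ, hybSeq L m * hybSeq F (m + k) - hybSeq L (m + k) * hybSeq F m
      = (2 * (-q) ^ m * F k) • C := by
    intro m k
    induction k using Nat.twoStepInduction with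
    | zero => simp [hF0]
    | one => rw [hbase m, hF1, mul_one]
    | more k ih ih1 =>
        rw [show m + (k + 2) = m + k + 2 from rfl, hrecF' (m + k), hrecL' (m + k)]
        rw [mul_add, add_mul, mul_smul_comm, mul_smul_comm, smul_mul_assoc, smul_mul_assoc]
        have expand : ∀ A B A' B' : HybridK,
            p • A + q • B - (p • A' + q • B') = p • (A - A') + q • (B - B') := by
          intro A B A' B'; module
        rw [expand, show m + k + 1 = m + (k + 1) from rfl, ih1, ih,
          smul_smul, smul_smul, ← add_smul, hFrec k]
        congr 1
        ring
  intro n r s hrs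
  obtain ⟨k, rfl⟩ := Nat.exists_eq_add_of_le hrs
  rw [show r + k - r = k from by omega, show n + (r + k) = n + r + k from by omega]
  exact main (n + r) k
end
end

section
/- With α̲ = 1 + α·i + α²·ε + α³·h, one has α̲² = (HL_0 + r_{p,q}) + (α − β)(HF_0 + s_{p,q}), where r_{p,q} = −1 + (p/2)(F_6 + 2F_3 − F_2) + q(F_5 + 2F_2 − F_1) and s_{p,q} = (1/2)(F_6 + 2F_3 − F_2); similarly β̲² = (HL_0 + r_{p,q}) − (α − β)(HF_0 + s_{p,q}). -/
open Matrix

noncomputable section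

/-- the squares α̲² and β̲². -/
theorem hybrid_alpha_sq (p q α β : ℝ) (hpq : p ^ 2 + 4 * q > 0)
    (hα : α ^ 2 = p * α + q) (hβ : β ^ 2 = p * β + q) (hab : α > β)
    (F : ℕ → ℝ) (hF0 : F 0 = 0) (hF1 : F 1 = 1)
    (hFrec : ∀ n : ℕ, F (n + 2) = p * F (n + 1) + q * F n) :
    hyb 1 α (α ^ 2) (α ^ 3) ^ 2
      = (hyb 2 p (p ^ 2 + 2 * q) (p ^ 3 + 3 * p * q)
          + (-1 + (p / 2) * (F 6 + 2 * F 3 - F 2)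
              + q * (F 5 + 2 * F 2 - F 1)) • (1 : HybridK))
        + (α - β) • (hyb 0 1 p (p ^ 2 + q)
          + ((1 / 2) * (F 6 + 2 * F 3 - F 2)) • (1 : HybridK)) ∧
    hyb 1 β (β ^ 2) (β ^ 3) ^ 2
      = (hyb 2 p (p ^ 2 + 2 * q) (p ^ 3 + 3 * p * q)
          + (-1 + (p / 2) * (F 6 + 2 * F 3 - F 2)
              + q * (F 5 + 2 * F 2 - F 1)) • (1 : HybridK))
        - (α - β) • (hyb 0 1 p (p ^ 2 + q)
          + ((1 / 2) * (F 6 + 2 * F 3 - F 2)) • (1 : HybridK)) := by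
  have hne : α - β ≠ 0 := sub_ne_zero.mpr (ne_of_gt hab)
  have key : (α - β) * (α + β - p) = 0 := by linear_combination hα - hβ
  have hp : p = α + β := by
    rcases mul_eq_zero.mp key with h | h
    · exact absurd h hne
    · linarith
  subst hp
  have hq : q = -(α * β) := by linear_combination -hα
  subst hq
  have h2 : F 2 = (α + β) * F 1 + -(α * β) * F 0 := hFrec 0
  have h3 : F 3 = (α + β) * F 2 + -(α * β) * F 1 := hFrec 1
  have h4 : F 4 = (α + β) * F 3 + -(α * β) * F 2 := hFrec 2
  have h5 : F 5 = (α + β) * F 4 + -(α * β) * F 3 := hFrec 3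
  have h6 : F 6 = (α + β) * F 5 + -(α * β) * F 4 := hFrec 4
  constructor <;>
  · ext i j
    fin_cases i <;> fin_cases j <;>
      simp [hyb, hi, heps, hh, pow_succ, Matrix.mul_apply, Fin.sum_univ_two,
        Matrix.one_apply, h2, h3, h4, h5, h6, hF0, hF1] <;> ring
end
end

section
/- In the hybrid number algebra, for α a root of t² − pt − q = 0 and α̲ = 1 + α·i + α²·ε + α³·h, one has α·HJ_{n+1} + q·HJ_n = (αb + qa)·αⁿ·α̲ for all n ≥ 0, where scalar multiplication by the real number αⁿ(αb + qa) is meant. -/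
open Matrix

noncomputable section

/-- α·HJ_{n+1} + q·HJ_n = (αb + qa)·αⁿ·α̲. -/
theorem hybrid_horadam_alpha_shift (p q a b α : ℝ) (hpq : p ^ 2 + 4 * q > 0)
    (hα : α ^ 2 = p * α + q)
    (J : ℕ → ℝ) (hJ0 : J 0 = a) (hJ1 : J 1 = b)
    (hJrec : ∀ n : ℕ, J (n + 2) = p * J (n + 1) + q * J n) :
    ∀ n : ℕ,
      α • hybSeq J (n + 1) + q • hybSeq J n
        = ((α * b + q * a) * α ^ n) • hyb 1 α (α ^ 2) (α ^ 3) := by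
  have key : ∀ n : ℕ, α * J (n + 1) + q * J n = α ^ n * (α * b + q * a) := by
    intro n
    induction n with
    | zero => simp [hJ0, hJ1]
    | succ k ih =>
      have := hJrec k
      have h2 : α * (α * J (k + 1) + q * J k) = α * J (k + 2) + q * J (k + 1) := by
        linear_combination (-α) * hJrec k + J (k + 1) * hα
      calc α * J (k + 1 + 1) + q * J (k + 1) = α * (α ^ k * (α * b + q * a)) := by
            rw [← h2, ih]
        _ = α ^ (k + 1) * (α * b + q * a) := by ring
  intro n
  have k0 := key n
  have k1 := key (n + 1)
  have k2 := key (n + 2)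
  have k3 := key (n + 3)
  simp only [pow_succ] at k1 k2 k3
  ext i j
  fin_cases i <;> fin_cases j <;>
    simp [hybSeq, hyb, hi, heps, hh, Matrix.one_apply, Matrix.add_apply,
      Matrix.smul_apply, smul_eq_mul] <;>
    nlinarith [k0, k1, k2, k3, sq_nonneg α]
end
end
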